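/- arXiv:2106.03187 — 3 statements merged into one kernel-verified Lean document; each statement's English description precedes it below -/
import Mathlib

section
/- Let μ be a probability measure on (0,∞) with Laplace transform φ(s) = ∫ e^(−sx) dμ(x), let n ≥ 1 be an integer and let q be real with n−1 < q < n. Then φ is n-times differentiable on (0,∞) with (−1)^n φ^(n)(s) = ∫ x^n e^(−sx) dμ(x) for s > 0, and (as an identity in [0,∞], by Tonelli) ∫₀^∞ s^(n−q−1) (∫ x^n e^(−sx) dμ(x)) ds = Γ(n−q) · ∫ x^q dμ(x). Equivalently, E(X^q) = ((−1)^n / Γ(n−q)) ∫₀^∞ φ^(n)(s) s^(n−q−1) ds for a positive random variable X with law μ. -/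
/-!
Differentiating under the integral sign, the `k`-th derivative of the Laplace transform is
`(-1)^k ∫ x^k e^(-sx) dμ(x)`; the exponential decay of `x^k e^(-sx)`, uniform for `s` away
from `0`, supplies the dominating functions. For `x > 0` and `p > 0` the substitution `t = sx`
gives `∫₀^∞ s^(p-1) e^(-sx) ds = Γ(p) x^(-p)`, so with `p = n - q`, Tonelli's theorem turns
`∫₀^∞ s^(n-q-1) ∫ x^n e^(-sx) dμ(x) ds` into `Γ(n-q) ∫ x^q dμ(x)`.
-/

open Real MeasureTheory Set

noncomputable def laplaceMoment (μ : Measure ℝ) (k : ℕ) (s : ℝ) : ℝ :=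
  ∫ x, x ^ k * exp (-(s * x)) ∂μ

lemma pow_mul_exp_neg_mul_le {m : ℕ} {δ t y : ℝ} (hδ : 0 < δ) (hδt : δ ≤ t) (hy : 0 ≤ y) :
    y ^ m * exp (-(t * y)) ≤ m.factorial / δ ^ m := by
  have hpow : (δ * y) ^ m ≤ m.factorial * exp (t * y) := by
    calc (δ * y) ^ m ≤ m.factorial * exp (δ * y) :=
          (div_le_iff₀' (by positivity)).1 (pow_div_factorial_le_exp _ (by positivity) m)
      _ ≤ m.factorial * exp (t * y) := by gcongr
  calc y ^ m * exp (-(t * y)) = (δ * y) ^ m * exp (-(t * y)) / δ ^ m := by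
        rw [mul_pow]; field_simp
    _ ≤ m.factorial * exp (t * y) * exp (-(t * y)) / δ ^ m := by gcongr
    _ = m.factorial / δ ^ m := by rw [mul_assoc, ← exp_add, add_neg_cancel, exp_zero, mul_one]

section LaplaceMoment

variable {μ : Measure ℝ} [IsFiniteMeasure μ]

lemma integrable_pow_mul_exp_neg_mul (hμ : ∀ᵐ x ∂μ, 0 ≤ x) (k : ℕ) {s : ℝ} (hs : 0 < s) :
    Integrable (fun x ↦ x ^ k * exp (-(s * x))) μ := by
  refine Integrable.mono' (integrable_const ((k.factorial : ℝ) / s ^ k)) (by fun_prop) ?_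
  filter_upwards [hμ] with x hx
  rw [norm_of_nonneg (by positivity)]
  exact pow_mul_exp_neg_mul_le hs le_rfl hx

lemma hasDerivAt_laplaceMoment (hμ : ∀ᵐ x ∂μ, 0 ≤ x) (k : ℕ) {s : ℝ} (hs : 0 < s) :
    HasDerivAt (laplaceMoment μ k) (-laplaceMoment μ (k + 1) s) s := by
  have hbound : ∀ᵐ x ∂μ, ∀ t ∈ Ioi (s / 2),
      ‖-(x ^ (k + 1) * exp (-(t * x)))‖ ≤ (k + 1).factorial / (s / 2) ^ (k + 1) := by
    filter_upwards [hμ] with x hx t ht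
    rw [norm_neg, norm_of_nonneg (by positivity)]
    exact pow_mul_exp_neg_mul_le (half_pos hs) ht.le hx
  have hderiv : ∀ᵐ x ∂μ, ∀ t ∈ Ioi (s / 2), HasDerivAt (fun t ↦ x ^ k * exp (-(t * x)))
      (-(x ^ (k + 1) * exp (-(t * x)))) t := by
    refine .of_forall fun x t _ ↦ ?_
    have hexp : HasDerivAt (fun t ↦ -(t * x)) (-x) t := (hasDerivAt_mul_const x).neg
    exact (hexp.exp.const_mul (x ^ k)).congr_deriv (by ring)
  have h := hasDerivAt_integral_of_dominated_loc_of_deriv_le (Ioi_mem_nhds (half_lt_self hs))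
    (.of_forall fun t ↦ by fun_prop) (integrable_pow_mul_exp_neg_mul hμ k hs) (by fun_prop)
    hbound (integrable_const _) hderiv
  have hderiv_integral := h.2
  rwa [integral_neg] at hderiv_integral

lemma iteratedDeriv_laplaceMoment_zero (hμ : ∀ᵐ x ∂μ, 0 ≤ x) (k : ℕ) :
    EqOn (iteratedDeriv k (laplaceMoment μ 0)) (fun s ↦ (-1) ^ k * laplaceMoment μ k s)
      (Ioi 0) := by
  induction k with
  | zero => intro s _; simp
  | succ k ih =>
    intro s hs
    rw [iteratedDeriv_succ, (ih.eventuallyEq_of_mem (Ioi_mem_nhds hs)).deriv_eq,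
      ((hasDerivAt_laplaceMoment hμ k hs).const_mul _).deriv, pow_succ]
    ring

lemma differentiableAt_iteratedDeriv_laplaceMoment_zero (hμ : ∀ᵐ x ∂μ, 0 ≤ x) (k : ℕ)
    {s : ℝ} (hs : 0 < s) : DifferentiableAt ℝ (iteratedDeriv k (laplaceMoment μ 0)) s := by
  rw [((iteratedDeriv_laplaceMoment_zero hμ k).eventuallyEq_of_mem
    (Ioi_mem_nhds hs)).differentiableAt_iff]
  exact ((hasDerivAt_laplaceMoment hμ k hs).const_mul _).differentiableAt

end LaplaceMoment

lemma lintegral_rpow_mul_exp_neg_mul_Ioi {a r : ℝ} (ha : 0 < a) (hr : 0 < r) :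
    ∫⁻ t in Ioi 0, ENNReal.ofReal (t ^ (a - 1) * exp (-(r * t))) =
      ENNReal.ofReal ((1 / r) ^ a * Gamma a) := by
  have hint := integral_rpow_mul_exp_neg_mul_Ioi ha hr
  have hpos : 0 < (1 / r) ^ a * Gamma a := mul_pos (by positivity) (Gamma_pos_of_pos ha)
  rw [← hint, ofReal_integral_eq_lintegral_ofReal (Integrable.of_integral_ne_zero
    (hint ▸ hpos.ne'))
    ((ae_restrict_mem measurableSet_Ioi).mono fun t (ht : 0 < t) ↦ by positivity)]

lemma lintegral_rpow_mul_pow_mul_exp_neg_mul_Ioi {n : ℕ} {q x : ℝ} (hq : q < n) (hx : 0 < x) :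
    ∫⁻ s in Ioi 0, ENNReal.ofReal (s ^ ((n : ℝ) - q - 1)) *
        ENNReal.ofReal (x ^ n * exp (-(s * x))) =
      ENNReal.ofReal (Gamma ((n : ℝ) - q)) * ENNReal.ofReal (x ^ q) := by
  have hnq : 0 < (n : ℝ) - q := sub_pos.2 hq
  calc ∫⁻ s in Ioi 0, ENNReal.ofReal (s ^ ((n : ℝ) - q - 1)) *
          ENNReal.ofReal (x ^ n * exp (-(s * x)))
      = ∫⁻ s in Ioi 0, ENNReal.ofReal (x ^ n) *
          ENNReal.ofReal (s ^ ((n : ℝ) - q - 1) * exp (-(x * s))) := by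
        refine setLIntegral_congr_fun measurableSet_Ioi fun s hs ↦ ?_
        rw [← ENNReal.ofReal_mul (rpow_nonneg hs.le _), ← ENNReal.ofReal_mul (by positivity),
          mul_comm s x]
        ring_nf
    _ = ENNReal.ofReal (x ^ n) *
          ENNReal.ofReal ((1 / x) ^ ((n : ℝ) - q) * Gamma ((n : ℝ) - q)) := by
        rw [lintegral_const_mul' _ _ ENNReal.ofReal_ne_top,
          lintegral_rpow_mul_exp_neg_mul_Ioi hnq hx]
    _ = ENNReal.ofReal (Gamma ((n : ℝ) - q)) * ENNReal.ofReal (x ^ q) := by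
        rw [← ENNReal.ofReal_mul (by positivity), ← ENNReal.ofReal_mul (Gamma_pos_of_pos hnq).le]
        congr 1
        rw [one_div, inv_rpow hx.le, ← rpow_neg hx.le, ← rpow_natCast, ← mul_assoc,
          ← rpow_add hx, neg_sub, add_sub_cancel, mul_comm]

lemma lintegral_rpow_mul_lintegral_pow_mul_exp_neg_mul {μ : Measure ℝ} [SFinite μ]
    (hμ : ∀ᵐ x ∂μ, 0 < x) {n : ℕ} {q : ℝ} (hq : q < n) :
    ∫⁻ s in Ioi 0, ENNReal.ofReal (s ^ ((n : ℝ) - q - 1)) *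
        ∫⁻ x, ENNReal.ofReal (x ^ n * exp (-(s * x))) ∂μ =
      ENNReal.ofReal (Gamma ((n : ℝ) - q)) * ∫⁻ x, ENNReal.ofReal (x ^ q) ∂μ := by
  have hmeas : Measurable fun z : ℝ × ℝ ↦ ENNReal.ofReal (z.1 ^ ((n : ℝ) - q - 1)) *
      ENNReal.ofReal (z.2 ^ n * exp (-(z.1 * z.2))) := by fun_prop
  calc ∫⁻ s in Ioi 0, ENNReal.ofReal (s ^ ((n : ℝ) - q - 1)) *
          ∫⁻ x, ENNReal.ofReal (x ^ n * exp (-(s * x))) ∂μ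
      = ∫⁻ s in Ioi 0, ∫⁻ x, ENNReal.ofReal (s ^ ((n : ℝ) - q - 1)) *
          ENNReal.ofReal (x ^ n * exp (-(s * x))) ∂μ :=
        lintegral_congr fun s ↦ (lintegral_const_mul' _ _ ENNReal.ofReal_ne_top).symm
    _ = ∫⁻ x, (∫⁻ s in Ioi 0, ENNReal.ofReal (s ^ ((n : ℝ) - q - 1)) *
          ENNReal.ofReal (x ^ n * exp (-(s * x)))) ∂μ :=
        lintegral_lintegral_swap hmeas.aemeasurable
    _ = ∫⁻ x, ENNReal.ofReal (Gamma ((n : ℝ) - q)) * ENNReal.ofReal (x ^ q) ∂μ :=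
        lintegral_congr_ae (hμ.mono fun x hx ↦ lintegral_rpow_mul_pow_mul_exp_neg_mul_Ioi hq hx)
    _ = ENNReal.ofReal (Gamma ((n : ℝ) - q)) * ∫⁻ x, ENNReal.ofReal (x ^ q) ∂μ :=
        lintegral_const_mul' _ _ ENNReal.ofReal_ne_top

lemma integral_rpow_eq_inv_Gamma_mul_integral_laplaceMoment {μ : Measure ℝ} [IsFiniteMeasure μ]
    (hμ : ∀ᵐ x ∂μ, 0 < x) {n : ℕ} {q : ℝ} (hq : q < n) :
    ∫ x, x ^ q ∂μ = (Gamma ((n : ℝ) - q))⁻¹ *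
      ∫ s in Ioi 0, laplaceMoment μ n s * s ^ ((n : ℝ) - q - 1) := by
  -- When `∫⁻ x, x ^ q ∂μ = ∞` both sides are `0`: the Bochner integrals of non-integrable
  -- functions and `ENNReal.toReal ∞` vanish alike.
  have hμ₀ : ∀ᵐ x ∂μ, 0 ≤ x := hμ.mono fun x hx ↦ hx.le
  have hΓ : 0 < Gamma ((n : ℝ) - q) := Gamma_pos_of_pos (sub_pos.2 hq)
  have hL_nonneg (s : ℝ) : 0 ≤ laplaceMoment μ n s :=
    integral_nonneg_of_ae (hμ₀.mono fun x hx ↦ by positivity)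
  have hL_ofReal {s : ℝ} (hs : 0 < s) : ENNReal.ofReal (laplaceMoment μ n s) =
      ∫⁻ x, ENNReal.ofReal (x ^ n * exp (-(s * x))) ∂μ :=
    ofReal_integral_eq_lintegral_ofReal (integrable_pow_mul_exp_neg_mul hμ₀ n hs)
      (hμ₀.mono fun x hx ↦ by positivity)
  have hL_cont : ContinuousOn (laplaceMoment μ n) (Ioi 0) := fun s hs ↦
    (hasDerivAt_laplaceMoment hμ₀ n hs).continuousAt.continuousWithinAt
  have hmoment : ∫ s in Ioi 0, laplaceMoment μ n s * s ^ ((n : ℝ) - q - 1) =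
      (ENNReal.ofReal (Gamma ((n : ℝ) - q)) * ∫⁻ x, ENNReal.ofReal (x ^ q) ∂μ).toReal := by
    rw [integral_eq_lintegral_of_nonneg_ae
      ((ae_restrict_mem measurableSet_Ioi).mono fun s (hs : 0 < s) ↦
        mul_nonneg (hL_nonneg s) (rpow_nonneg hs.le _))
      ((hL_cont.mul (continuousOn_id.rpow_const fun s hs ↦ .inl (ne_of_gt hs)))
        |>.aestronglyMeasurable measurableSet_Ioi),
      ← lintegral_rpow_mul_lintegral_pow_mul_exp_neg_mul hμ hq]
    congr 1
    refine setLIntegral_congr_fun measurableSet_Ioi fun s hs ↦ ?_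
    rw [ENNReal.ofReal_mul (hL_nonneg s), hL_ofReal hs, mul_comm]
  rw [hmoment, ENNReal.toReal_mul, ENNReal.toReal_ofReal hΓ.le,
    integral_eq_lintegral_of_nonneg_ae (hμ.mono fun x hx ↦ rpow_nonneg hx.le q) (by fun_prop),
    inv_mul_cancel_left₀ hΓ.ne']

theorem stmt_7_general (μ : Measure ℝ) (hprob : IsProbabilityMeasure μ)
    (hpos : μ (Set.Ioi (0 : ℝ))ᶜ = 0)
    (φ : ℝ → ℝ) (hφ : ∀ s : ℝ, φ s = ∫ x, Real.exp (-(s * x)) ∂μ)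
    (n : ℕ) (q : ℝ) (hq2 : q < n) :
    (∀ s : ℝ, 0 < s → ∀ k : ℕ, k < n → DifferentiableAt ℝ (iteratedDeriv k φ) s) ∧
    (∀ s : ℝ, 0 < s →
      (-1 : ℝ) ^ n * iteratedDeriv n φ s = ∫ x, x ^ n * Real.exp (-(s * x)) ∂μ) ∧
    (∫⁻ s in Set.Ioi (0 : ℝ),
        ENNReal.ofReal (s ^ ((n : ℝ) - q - 1)) *
          ∫⁻ x, ENNReal.ofReal (x ^ n * Real.exp (-(s * x))) ∂μ
      = ENNReal.ofReal (Real.Gamma ((n : ℝ) - q)) *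
          ∫⁻ x, ENNReal.ofReal (x ^ q) ∂μ) ∧
    (∫ x, x ^ q ∂μ =
      ((-1 : ℝ) ^ n / Real.Gamma ((n : ℝ) - q)) *
        ∫ s in Set.Ioi (0 : ℝ), iteratedDeriv n φ s * s ^ ((n : ℝ) - q - 1)) := by
  have hμ : ∀ᵐ x ∂μ, 0 < x := mem_ae_iff.2 hpos
  have hμ₀ : ∀ᵐ x ∂μ, 0 ≤ x := hμ.mono fun x hx ↦ hx.le
  obtain rfl : φ = laplaceMoment μ 0 := funext fun s ↦ by simp [hφ, laplaceMoment]
  have hsign : ((-1 : ℝ) ^ n) * (-1) ^ n = 1 := by rw [← mul_pow]; norm_num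
  have hderiv_n : EqOn (iteratedDeriv n (laplaceMoment μ 0))
      (fun s ↦ (-1) ^ n * laplaceMoment μ n s) (Ioi 0) :=
    iteratedDeriv_laplaceMoment_zero hμ₀ n
  refine ⟨fun s hs k _ ↦ differentiableAt_iteratedDeriv_laplaceMoment_zero hμ₀ k hs,
    fun s hs ↦ ?_, lintegral_rpow_mul_lintegral_pow_mul_exp_neg_mul hμ hq2, ?_⟩
  · rw [hderiv_n hs, ← mul_assoc, hsign, one_mul, laplaceMoment]
  · rw [setIntegral_congr_fun measurableSet_Ioi fun s hs ↦ by rw [hderiv_n hs, mul_assoc],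
      integral_const_mul, integral_rpow_eq_inv_Gamma_mul_integral_laplaceMoment hμ hq2,
      div_eq_mul_inv, mul_mul_mul_comm, hsign, one_mul]

/-- Let `μ` be a probability measure on `(0,∞)` with Laplace transform
`φ(s) = ∫ e^(-sx) dμ(x)`, let `n ≥ 1` and `n-1 < q < n`.  Then `φ` is `n`-times
differentiable on `(0,∞)` with `(-1)^n φ^(n)(s) = ∫ x^n e^(-sx) dμ(x)` for `s > 0`; as
an identity in `[0,∞]` (Tonelli),
`∫₀^∞ s^(n-q-1) (∫ x^n e^(-sx) dμ(x)) ds = Γ(n-q) ∫ x^q dμ(x)`; equivalently,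
`E(X^q) = ((-1)^n / Γ(n-q)) ∫₀^∞ φ^(n)(s) s^(n-q-1) ds`. -/
theorem stmt_7 (μ : Measure ℝ) (hprob : IsProbabilityMeasure μ)
    (hpos : μ (Set.Ioi (0 : ℝ))ᶜ = 0)
    (φ : ℝ → ℝ) (hφ : ∀ s : ℝ, φ s = ∫ x, Real.exp (-(s * x)) ∂μ)
    (n : ℕ) (hn : 1 ≤ n) (q : ℝ) (hq1 : (n : ℝ) - 1 < q) (hq2 : q < n) :
    (∀ s : ℝ, 0 < s → ∀ k : ℕ, k < n → DifferentiableAt ℝ (iteratedDeriv k φ) s) ∧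
    (∀ s : ℝ, 0 < s →
      (-1 : ℝ) ^ n * iteratedDeriv n φ s = ∫ x, x ^ n * Real.exp (-(s * x)) ∂μ) ∧
    (∫⁻ s in Set.Ioi (0 : ℝ),
        ENNReal.ofReal (s ^ ((n : ℝ) - q - 1)) *
          ∫⁻ x, ENNReal.ofReal (x ^ n * Real.exp (-(s * x))) ∂μ
      = ENNReal.ofReal (Real.Gamma ((n : ℝ) - q)) *
          ∫⁻ x, ENNReal.ofReal (x ^ q) ∂μ) ∧
    (∫ x, x ^ q ∂μ =
      ((-1 : ℝ) ^ n / Real.Gamma ((n : ℝ) - q)) *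
        ∫ s in Set.Ioi (0 : ℝ), iteratedDeriv n φ s * s ^ ((n : ℝ) - q - 1)) :=
  stmt_7_general μ hprob hpos φ hφ n q hq2
end

section
/- Let 0 < β < 1, λ > 0, 0 < ρ < 1, and let μ be a probability measure on [0,∞) whose Laplace transform satisfies ∫ e^(−sx) dμ(x) = exp((ρs+λ)^β − (s+λ)^β) for all s ≥ 0. Then for every q with 0 < q < 1, ∫ x^q dμ(x) = (β/Γ(1−q)) ∫₀^∞ exp((ρs+λ)^β − (s+λ)^β) · ((s+λ)^(β−1) − ρ(ρs+λ)^(β−1)) · s^(−q) ds. -/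
open Real MeasureTheory

/-! For `0 < q < 1` and `x ≥ 0` the Gamma integral gives
`Γ(1-q) x^q = ∫₀^∞ x e^{-sx} s^{-q} ds`. Integrating in `x` against `μ` and swapping the integrals
(Tonelli) expresses the `q`-th moment through `s ↦ ∫ x e^{-sx} dμ(x)`, which is minus the derivative
of the Laplace transform. For the given transform `exp((ρs+λ)^β - (s+λ)^β)` that derivative is
computed explicitly. -/

open Set

theorem lintegral_mul_exp_neg_mul_mul_rpow_neg {x q : ℝ} (hx : 0 ≤ x) (hq0 : 0 < q)
    (hq1 : q < 1) :
    ∫⁻ s in Ioi 0, ENNReal.ofReal (x * exp (-(s * x)) * s ^ (-q)) =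
      ENNReal.ofReal (Gamma (1 - q) * x ^ q) := by
  rcases hx.eq_or_lt with rfl | hx
  · simp [zero_rpow hq0.ne']
  have hcongr : EqOn (fun s => x * exp (-(s * x)) * s ^ (-q))
      (fun s => x * (s ^ (-q) * exp (-x * s ^ (1 : ℝ)))) (Ioi 0) := fun s _ => by
    simp only [rpow_one, neg_mul, mul_comm s x]
    ring
  have hint : IntegrableOn (fun s => x * exp (-(s * x)) * s ^ (-q)) (Ioi 0) :=
    (integrableOn_congr_fun hcongr measurableSet_Ioi).2
      ((integrableOn_rpow_mul_exp_neg_mul_rpow (by linarith) one_pos hx).const_mul x)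
  have hval : ∫ s in Ioi 0, x * exp (-(s * x)) * s ^ (-q) = Gamma (1 - q) * x ^ q :=
    calc ∫ s in Ioi 0, x * exp (-(s * x)) * s ^ (-q)
        = x * ∫ s in Ioi 0, s ^ ((1 - q) - 1) * exp (-(x * s)) := by
          rw [← integral_const_mul]
          refine setIntegral_congr_fun measurableSet_Ioi fun s _ => ?_
          simp only [sub_sub_cancel_left, mul_comm s x]
          ring
      _ = x * ((1 / x) ^ (1 - q) * Gamma (1 - q)) := by
          rw [integral_rpow_mul_exp_neg_mul_Ioi (by linarith) hx]
      _ = Gamma (1 - q) * x ^ q := by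
          rw [div_rpow zero_le_one hx.le, one_rpow, rpow_sub hx, rpow_one]
          field_simp
  rw [← hval, ofReal_integral_eq_lintegral_ofReal hint]
  filter_upwards [ae_restrict_mem measurableSet_Ioi] with s (hs : 0 < s)
  positivity

theorem mul_exp_neg_mul_le {s : ℝ} (hs : 0 < s) (x : ℝ) : x * exp (-(s * x)) ≤ exp (-1) / s := by
  rw [le_div_iff₀ hs]
  linarith [mul_exp_neg_le_exp_neg_one (s * x)]

section Laplace

variable {μ : Measure ℝ}

theorem integrable_mul_exp_neg_mul [IsFiniteMeasure μ] (hμ : ∀ᵐ x ∂μ, 0 ≤ x) {s : ℝ}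
    (hs : 0 < s) : Integrable (fun x => x * exp (-(s * x))) μ := by
  refine (integrable_const (exp (-1) / s)).mono' (by fun_prop) ?_
  filter_upwards [hμ] with x hx
  rw [norm_of_nonneg (by positivity)]
  exact mul_exp_neg_mul_le hs x

theorem hasDerivAt_integral_exp_neg_mul [IsFiniteMeasure μ] (hμ : ∀ᵐ x ∂μ, 0 ≤ x) {s : ℝ}
    (hs : 0 < s) :
    HasDerivAt (fun t => ∫ x, exp (-(t * x)) ∂μ) (-∫ x, x * exp (-(s * x)) ∂μ) s := by
  have hbound : ∀ᵐ x ∂μ, ∀ t ∈ Ioi (s / 2), ‖-(x * exp (-(t * x)))‖ ≤ exp (-1) / (s / 2) := by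
    filter_upwards [hμ] with x hx t (ht : s / 2 < t)
    rw [norm_neg, norm_of_nonneg (by positivity)]
    exact (mul_exp_neg_mul_le (by linarith) x).trans
      (div_le_div_of_nonneg_left (by positivity) (by positivity) ht.le)
  have hexp_int : Integrable (fun x => exp (-(s * x))) μ := by
    refine (integrable_const 1).mono' (by fun_prop) ?_
    filter_upwards [hμ] with x hx
    rw [norm_of_nonneg (exp_pos _).le, exp_le_one_iff]
    nlinarith
  rw [← integral_neg]
  refine (hasDerivAt_integral_of_dominated_loc_of_deriv_le (Ioi_mem_nhds (by linarith))
    (.of_forall fun t => by fun_prop) hexp_int (by fun_prop) hbound (integrable_const _)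
    (.of_forall fun x t _ => ?_)).2
  exact ((hasDerivAt_mul_const x).neg.exp).congr_deriv (by simp only [Pi.neg_apply]; ring)

theorem lintegral_rpow_eq_lintegral_mul_exp_neg_mul [SFinite μ] (hμ : ∀ᵐ x ∂μ, 0 ≤ x) {q : ℝ}
    (hq0 : 0 < q) (hq1 : q < 1) :
    ENNReal.ofReal (Gamma (1 - q)) * ∫⁻ x, ENNReal.ofReal (x ^ q) ∂μ =
      ∫⁻ s in Ioi 0, ∫⁻ x, ENNReal.ofReal (x * exp (-(s * x)) * s ^ (-q)) ∂μ := by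
  have hΓ : 0 ≤ Gamma (1 - q) := (Gamma_pos_of_pos (by linarith)).le
  calc ENNReal.ofReal (Gamma (1 - q)) * ∫⁻ x, ENNReal.ofReal (x ^ q) ∂μ
      = ∫⁻ x, ENNReal.ofReal (Gamma (1 - q) * x ^ q) ∂μ := by
        simp_rw [ENNReal.ofReal_mul hΓ]
        exact (lintegral_const_mul' _ _ ENNReal.ofReal_ne_top).symm
    _ = ∫⁻ x, (∫⁻ s in Ioi 0, ENNReal.ofReal (x * exp (-(s * x)) * s ^ (-q))) ∂μ := by
        refine lintegral_congr_ae ?_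
        filter_upwards [hμ] with x hx
        exact (lintegral_mul_exp_neg_mul_mul_rpow_neg hx hq0 hq1).symm
    _ = _ := lintegral_lintegral_swap (by fun_prop)

/-- Both sides are `toReal`s of the lintegrals above, so no integrability is assumed: if the moment
diverges, both Bochner integrals take the junk value `0`. -/
theorem integral_rpow_eq_integral_mul_exp_neg_mul [IsFiniteMeasure μ] (hμ : ∀ᵐ x ∂μ, 0 ≤ x)
    {q : ℝ} (hq0 : 0 < q) (hq1 : q < 1) :
    ∫ x, x ^ q ∂μ =
      (Gamma (1 - q))⁻¹ * ∫ s in Ioi 0, (∫ x, x * exp (-(s * x)) ∂μ) * s ^ (-q) := by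
  have hΓ : 0 < Gamma (1 - q) := Gamma_pos_of_pos (by linarith)
  have hinner : ∀ s ∈ Ioi (0 : ℝ), ∫⁻ x, ENNReal.ofReal (x * exp (-(s * x)) * s ^ (-q)) ∂μ =
      ENNReal.ofReal ((∫ x, x * exp (-(s * x)) ∂μ) * s ^ (-q)) := fun s (hs : 0 < s) => by
    rw [← integral_mul_const, ofReal_integral_eq_lintegral_ofReal
      ((integrable_mul_exp_neg_mul hμ hs).mul_const _)]
    filter_upwards [hμ] with x hx
    positivity
  have hmeas : StronglyMeasurable fun s => ∫ x, x * exp (-(s * x)) ∂μ :=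
    StronglyMeasurable.integral_prod_right (f := fun s x => x * exp (-(s * x)))
      (by fun_prop : Continuous fun p : ℝ × ℝ => p.2 * exp (-(p.1 * p.2))).stronglyMeasurable
  have hnonneg : 0 ≤ᵐ[volume.restrict (Ioi 0)]
      fun s => (∫ x, x * exp (-(s * x)) ∂μ) * s ^ (-q) := by
    filter_upwards [ae_restrict_mem measurableSet_Ioi] with s (hs : 0 < s)
    refine mul_nonneg (integral_nonneg_of_ae ?_) (by positivity)
    filter_upwards [hμ] with x hx
    positivity
  have key := congrArg ENNReal.toReal (lintegral_rpow_eq_lintegral_mul_exp_neg_mul hμ hq0 hq1)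
  rw [setLIntegral_congr_fun measurableSet_Ioi hinner, ENNReal.toReal_mul,
    ENNReal.toReal_ofReal hΓ.le] at key
  rw [integral_eq_lintegral_of_nonneg_ae (by filter_upwards [hμ] with x hx; positivity)
      (by fun_prop), integral_eq_lintegral_of_nonneg_ae hnonneg
      (hmeas.aestronglyMeasurable.mul (by fun_prop)), ← key]
  field_simp

end Laplace

theorem hasDerivAt_exp_rpow_sub_rpow {β lam ρ s : ℝ} (h₁ : ρ * s + lam ≠ 0) (h₂ : s + lam ≠ 0) :
    HasDerivAt (fun s => exp ((ρ * s + lam) ^ β - (s + lam) ^ β))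
      (-(β * (exp ((ρ * s + lam) ^ β - (s + lam) ^ β) *
        ((s + lam) ^ (β - 1) - ρ * (ρ * s + lam) ^ (β - 1))))) s := by
  have hlin : HasDerivAt (fun s : ℝ => ρ * s + lam) ρ s := by
    simpa using ((hasDerivAt_id s).const_mul ρ).add_const lam
  refine (((hlin.rpow_const (Or.inl h₁)).sub
    (((hasDerivAt_id s).add_const lam).rpow_const (Or.inl h₂))).exp).congr_deriv ?_
  simp only [Pi.sub_apply, id]
  ring

theorem stmt_9_general (β lam ρ : ℝ) (hlam : 0 < lam)
    (hρ0 : 0 < ρ)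
    (μ : Measure ℝ) (hprob : IsProbabilityMeasure μ) (hpos : μ (Set.Iio (0 : ℝ)) = 0)
    (hLT : ∀ s : ℝ, 0 ≤ s →
      ∫ x, Real.exp (-(s * x)) ∂μ = Real.exp ((ρ * s + lam) ^ β - (s + lam) ^ β)) :
    ∀ q : ℝ, 0 < q → q < 1 →
      ∫ x, x ^ q ∂μ =
        (β / Real.Gamma (1 - q)) *
          ∫ s in Set.Ioi (0 : ℝ),
            Real.exp ((ρ * s + lam) ^ β - (s + lam) ^ β) *
              ((s + lam) ^ (β - 1) - ρ * (ρ * s + lam) ^ (β - 1)) * s ^ (-q) := by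
  intro q hq0 hq1
  have hμ : ∀ᵐ x ∂μ, 0 ≤ x := ae_iff.2 (by simpa [not_le, Iio] using hpos)
  have htilted_mean : ∀ s ∈ Ioi (0 : ℝ), (∫ x, x * exp (-(s * x)) ∂μ) * s ^ (-q) =
      β * (exp ((ρ * s + lam) ^ β - (s + lam) ^ β) *
        ((s + lam) ^ (β - 1) - ρ * (ρ * s + lam) ^ (β - 1)) * s ^ (-q)) := fun s (hs : 0 < s) => by
    have hLT_near : (fun t => ∫ x, exp (-(t * x)) ∂μ) =ᶠ[nhds s]
        fun t => exp ((ρ * t + lam) ^ β - (t + lam) ^ β) := by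
      filter_upwards [Ioi_mem_nhds hs] with t (ht : 0 < t)
      exact hLT t ht.le
    have hderiv := (hasDerivAt_integral_exp_neg_mul hμ hs).unique
      ((hasDerivAt_exp_rpow_sub_rpow (by positivity) (by positivity)).congr_of_eventuallyEq
        hLT_near)
    rw [neg_inj.1 hderiv]
    ring
  rw [integral_rpow_eq_integral_mul_exp_neg_mul hμ hq0 hq1,
    setIntegral_congr_fun measurableSet_Ioi htilted_mean, integral_const_mul]
  ring

/-- For `0 < β < 1`, `λ > 0`, `0 < ρ < 1` and `μ` a probability measure on
`[0,∞)` with `∫ e^(-sx) dμ(x) = exp((ρs+λ)^β - (s+λ)^β)` for all `s ≥ 0`, for every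
`0 < q < 1`:
`∫ x^q dμ(x) = (β/Γ(1-q)) ∫₀^∞ exp((ρs+λ)^β-(s+λ)^β) ((s+λ)^(β-1) - ρ(ρs+λ)^(β-1)) s^(-q) ds`. -/
theorem stmt_9 (β lam ρ : ℝ) (hβ0 : 0 < β) (hβ1 : β < 1) (hlam : 0 < lam)
    (hρ0 : 0 < ρ) (hρ1 : ρ < 1)
    (μ : Measure ℝ) (hprob : IsProbabilityMeasure μ) (hpos : μ (Set.Iio (0 : ℝ)) = 0)
    (hLT : ∀ s : ℝ, 0 ≤ s →
      ∫ x, Real.exp (-(s * x)) ∂μ = Real.exp ((ρ * s + lam) ^ β - (s + lam) ^ β)) :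
    ∀ q : ℝ, 0 < q → q < 1 →
      ∫ x, x ^ q ∂μ =
        (β / Real.Gamma (1 - q)) *
          ∫ s in Set.Ioi (0 : ℝ),
            Real.exp ((ρ * s + lam) ^ β - (s + lam) ^ β) *
              ((s + lam) ^ (β - 1) - ρ * (ρ * s + lam) ^ (β - 1)) * s ^ (-q) :=
  stmt_9_general β lam ρ hlam hρ0 μ hprob hpos hLT
end

section
/- Let 0 < β < 1, λ > 0, 0 < ρ < 1, and let μ be a probability measure on [0,∞) whose Laplace transform satisfies ∫ e^(−sx) dμ(x) = exp((ρs+λ)^β − (s+λ)^β) for all s ≥ 0. Then μ has finite first and second moments with ∫ x dμ(x) = β λ^(β−1)(1−ρ) and ∫ x² dμ(x) = (β λ^(β−1)(1−ρ))² + β(1−β) λ^(β−2)(1−ρ²). -/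
/-!
The moments are read off the Laplace transform `L(s) = ∫ e^{-sx} dμ`. Since `μ` lives on
`[0, ∞)`, for `s > 0` the integrands `x^k e^{-sx}` are bounded, so differentiation under the
integral sign gives `∫ x^k e^{-sx} dμ = (-1)^k L^{(k)}(s)`, and the right-hand side is computed
from `L = exp ∘ ψ` with `ψ(s) = (ρs+λ)^β - (s+λ)^β`. Letting `s ↓ 0`, monotone convergence
turns `∫ x^k e^{-sx} dμ` into the `k`-th moment, which is therefore finite and equal to
`(-1)^k L^{(k)}(0)`.
-/

open Real MeasureTheory Filter Topology Metric Set
open scoped Nat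

lemma pow_mul_exp_neg_le (k : ℕ) {c x : ℝ} (hc : 0 < c) (hx : 0 ≤ x) :
    x ^ k * exp (-(c * x)) ≤ k ! / c ^ k := by
  have hexp : (c * x) ^ k ≤ exp (c * x) * k ! :=
    (div_le_iff₀ (by positivity)).1 (pow_div_factorial_le_exp (c * x) (by positivity) k)
  rw [le_div_iff₀ (by positivity)]
  calc x ^ k * exp (-(c * x)) * c ^ k = (c * x) ^ k * exp (-(c * x)) := by ring
    _ ≤ exp (c * x) * k ! * exp (-(c * x)) := by gcongr
    _ = k ! := by rw [mul_right_comm, ← exp_add, add_neg_cancel, exp_zero, one_mul]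

lemma hasDerivAt_pow_mul_exp_neg_mul (k : ℕ) (x t : ℝ) :
    HasDerivAt (fun t => x ^ k * exp (-(t * x))) (-(x ^ (k + 1) * exp (-(t * x)))) t := by
  have := (((hasDerivAt_id t).mul_const x).neg.exp).const_mul (x ^ k)
  exact this.congr_deriv (by simp only [Pi.neg_apply, id]; ring)

section Laplace

variable {μ : Measure ℝ} (hμ : ∀ᵐ x ∂μ, 0 ≤ x)
include hμ

lemma lintegral_ofReal_eq_of_tendsto_laplace {f : ℝ → ℝ} {L : ℝ}
    (hf : AEMeasurable f μ) (hf0 : 0 ≤ᵐ[μ] f)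
    (hint : ∀ s > 0, Integrable (fun x => f x * exp (-(s * x))) μ)
    (hlim : Tendsto (fun s => ∫ x, f x * exp (-(s * x)) ∂μ) (𝓝[>] 0) (𝓝 L)) :
    ∫⁻ x, ENNReal.ofReal (f x) ∂μ = ENNReal.ofReal L := by
  set u : ℕ → ℝ := fun n => 1 / ((n : ℝ) + 1)
  have hu0 : ∀ n, 0 < u n := fun n => by positivity
  have hu : Tendsto u atTop (𝓝[>] 0) :=
    tendsto_nhdsWithin_iff.2 ⟨tendsto_one_div_add_atTop_nhds_zero_nat, Eventually.of_forall hu0⟩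
  have hu_anti : Antitone u := fun n m hnm =>
    one_div_le_one_div_of_le (by positivity) (by gcongr)
  have hmono : ∀ᵐ x ∂μ, Monotone fun n => ENNReal.ofReal (f x * exp (-(u n * x))) := by
    filter_upwards [hμ, hf0] with x hx hfx n m hnm
    dsimp only
    gcongr
    exact hu_anti hnm
  have hconv : ∀ x, Tendsto (fun n => ENNReal.ofReal (f x * exp (-(u n * x)))) atTop
      (𝓝 (ENNReal.ofReal (f x))) := by
    intro x
    have hcont : Continuous fun s : ℝ => ENNReal.ofReal (f x * exp (-(s * x))) :=
      ENNReal.continuous_ofReal.comp (by fun_prop)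
    simpa [Function.comp_def] using (hcont.tendsto 0).comp (tendsto_nhdsWithin_iff.1 hu).1
  have hMCT := lintegral_tendsto_of_tendsto_of_monotone
    (fun n => (hf.mul (by fun_prop)).ennreal_ofReal) hmono (Eventually.of_forall hconv)
  have hlim' : Tendsto (fun n => ∫⁻ x, ENNReal.ofReal (f x * exp (-(u n * x))) ∂μ) atTop
      (𝓝 (ENNReal.ofReal L)) := by
    have hof : ∀ n, ∫⁻ x, ENNReal.ofReal (f x * exp (-(u n * x))) ∂μ
        = ENNReal.ofReal (∫ x, f x * exp (-(u n * x)) ∂μ) := fun n =>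
      (ofReal_integral_eq_lintegral_ofReal (hint _ (hu0 n))
        (by filter_upwards [hf0] with x hx using mul_nonneg hx (exp_pos _).le)).symm
    simpa only [hof, Function.comp_def] using
      (ENNReal.continuous_ofReal.tendsto L).comp (hlim.comp hu)
  exact tendsto_nhds_unique hMCT hlim'

lemma integrable_and_integral_eq_of_tendsto_laplace {f : ℝ → ℝ} {L : ℝ}
    (hf : AEStronglyMeasurable f μ) (hf0 : 0 ≤ᵐ[μ] f)
    (hint : ∀ s > 0, Integrable (fun x => f x * exp (-(s * x))) μ)
    (hlim : Tendsto (fun s => ∫ x, f x * exp (-(s * x)) ∂μ) (𝓝[>] 0) (𝓝 L)) :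
    Integrable f μ ∧ ∫ x, f x ∂μ = L := by
  have hlint := lintegral_ofReal_eq_of_tendsto_laplace hμ hf.aemeasurable hf0 hint hlim
  have hL : 0 ≤ L := ge_of_tendsto hlim <| eventually_nhdsWithin_of_forall fun s _ =>
    integral_nonneg_of_ae (by filter_upwards [hf0] with x hx using mul_nonneg hx (exp_pos _).le)
  refine ⟨⟨hf, ?_⟩, ?_⟩
  · rw [hasFiniteIntegral_iff_ofReal hf0, hlint]
    exact ENNReal.ofReal_lt_top
  · rw [integral_eq_lintegral_of_nonneg_ae hf0 hf, hlint, ENNReal.toReal_ofReal hL]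

variable [IsFiniteMeasure μ]

lemma integrable_pow_mul_exp_neg (k : ℕ) {s : ℝ} (hs : 0 < s) :
    Integrable (fun x => x ^ k * exp (-(s * x))) μ := by
  refine (integrable_const ((k ! : ℝ) / s ^ k)).mono' (by fun_prop) ?_
  filter_upwards [hμ] with x hx
  rw [Real.norm_of_nonneg (by positivity)]
  exact pow_mul_exp_neg_le k hs hx

lemma hasDerivAt_integral_pow_mul_exp_neg (k : ℕ) {s : ℝ} (hs : 0 < s) :
    HasDerivAt (fun t => ∫ x, x ^ k * exp (-(t * x)) ∂μ)
      (-∫ x, x ^ (k + 1) * exp (-(s * x)) ∂μ) s := by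
  have hbound : ∀ᵐ x ∂μ, ∀ t ∈ ball s (s / 2),
      ‖-(x ^ (k + 1) * exp (-(t * x)))‖ ≤ (k + 1)! / (s / 2) ^ (k + 1) := by
    filter_upwards [hμ] with x hx t ht
    have hst : s / 2 ≤ t := by
      rw [mem_ball, dist_eq, abs_lt] at ht
      linarith
    rw [norm_neg, Real.norm_of_nonneg (by positivity)]
    calc x ^ (k + 1) * exp (-(t * x)) ≤ x ^ (k + 1) * exp (-(s / 2 * x)) := by gcongr
      _ ≤ _ := pow_mul_exp_neg_le _ (by positivity) hx
  rw [← integral_neg]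
  exact (hasDerivAt_integral_of_dominated_loc_of_deriv_le (ball_mem_nhds s (by positivity))
    (Eventually.of_forall fun t => by fun_prop) (integrable_pow_mul_exp_neg hμ k hs)
    (by fun_prop) hbound (integrable_const _)
    (Eventually.of_forall fun x t _ => hasDerivAt_pow_mul_exp_neg_mul k x t)).2

lemma integral_pow_succ_mul_exp_neg_eq {k : ℕ} {F F' : ℝ → ℝ}
    (hF : ∀ s > 0, ∫ x, x ^ k * exp (-(s * x)) ∂μ = F s)
    (hF' : ∀ s > 0, HasDerivAt F (F' s) s) {s : ℝ} (hs : 0 < s) :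
    ∫ x, x ^ (k + 1) * exp (-(s * x)) ∂μ = -F' s := by
  have hFs : F =ᶠ[𝓝 s] fun t => ∫ x, x ^ k * exp (-(t * x)) ∂μ :=
    eventually_of_mem (Ioi_mem_nhds hs) fun t ht => (hF t ht).symm
  have := ((hasDerivAt_integral_pow_mul_exp_neg hμ k hs).congr_of_eventuallyEq hFs).unique
    (hF' s hs)
  linarith

lemma integrable_pow_and_integral_eq {k : ℕ} {F : ℝ → ℝ}
    (hF : ∀ s > 0, ∫ x, x ^ k * exp (-(s * x)) ∂μ = F s)
    (hcont : ContinuousWithinAt F (Ioi 0) 0) :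
    Integrable (fun x => x ^ k) μ ∧ ∫ x, x ^ k ∂μ = F 0 :=
  integrable_and_integral_eq_of_tendsto_laplace hμ (by fun_prop)
    (by filter_upwards [hμ] with x hx using by positivity)
    (fun _ hs => integrable_pow_mul_exp_neg hμ k hs)
    (hcont.tendsto.congr' (eventually_nhdsWithin_of_forall fun s hs => (hF s hs).symm))

end Laplace

lemma hasDerivAt_mul_add_rpow {c lam p s : ℝ} (h : 0 < c * s + lam) :
    HasDerivAt (fun t => (c * t + lam) ^ p) (c * p * (c * s + lam) ^ (p - 1)) s := by
  simpa using (((hasDerivAt_id s).const_mul c).add_const lam).rpow_const (p := p) (Or.inl h.ne')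

lemma hasDerivAt_add_rpow {lam p s : ℝ} (h : 0 < s + lam) :
    HasDerivAt (fun t => (t + lam) ^ p) (p * (s + lam) ^ (p - 1)) s := by
  simpa using hasDerivAt_mul_add_rpow (c := 1) (p := p) (by simpa using h)

namespace TemperedStableAR

variable (β lam ρ : ℝ)

noncomputable def logLaplace (s : ℝ) : ℝ := (ρ * s + lam) ^ β - (s + lam) ^ β

noncomputable def logLaplaceDeriv (s : ℝ) : ℝ :=
  ρ * β * (ρ * s + lam) ^ (β - 1) - β * (s + lam) ^ (β - 1)

noncomputable def logLaplaceDeriv2 (s : ℝ) : ℝ :=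
  ρ * β * (ρ * (β - 1) * (ρ * s + lam) ^ (β - 2)) - β * ((β - 1) * (s + lam) ^ (β - 2))

lemma logLaplace_zero : logLaplace β lam ρ 0 = 0 := by simp [logLaplace]

lemma logLaplaceDeriv_zero : logLaplaceDeriv β lam ρ 0 = -(β * lam ^ (β - 1) * (1 - ρ)) := by
  simp only [logLaplaceDeriv, mul_zero, zero_add]
  ring

lemma logLaplaceDeriv2_zero :
    logLaplaceDeriv2 β lam ρ 0 = β * (1 - β) * lam ^ (β - 2) * (1 - ρ ^ 2) := by
  simp only [logLaplaceDeriv2, mul_zero, zero_add]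
  ring

variable {β lam ρ} {s : ℝ} (hA : 0 < ρ * s + lam) (hB : 0 < s + lam)
include hA hB

lemma hasDerivAt_logLaplace : HasDerivAt (logLaplace β lam ρ) (logLaplaceDeriv β lam ρ s) s :=
  (hasDerivAt_mul_add_rpow hA).sub (hasDerivAt_add_rpow hB)

lemma hasDerivAt_logLaplaceDeriv :
    HasDerivAt (logLaplaceDeriv β lam ρ) (logLaplaceDeriv2 β lam ρ s) s := by
  have h := ((hasDerivAt_mul_add_rpow (p := β - 1) hA).const_mul (ρ * β)).sub
    ((hasDerivAt_add_rpow (p := β - 1) hB).const_mul β)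
  rwa [sub_sub, one_add_one_eq_two] at h

lemma continuousAt_logLaplaceDeriv2 : ContinuousAt (logLaplaceDeriv2 β lam ρ) s :=
  (((hasDerivAt_mul_add_rpow (p := β - 2) hA).continuousAt.const_mul _).const_mul _).sub
    (((hasDerivAt_add_rpow (p := β - 2) hB).continuousAt.const_mul _).const_mul _)

lemma hasDerivAt_exp_logLaplace :
    HasDerivAt (fun t => exp (logLaplace β lam ρ t))
      (exp (logLaplace β lam ρ s) * logLaplaceDeriv β lam ρ s) s :=
  (hasDerivAt_logLaplace hA hB).exp

lemma hasDerivAt_exp_logLaplace_mul_logLaplaceDeriv :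
    HasDerivAt (fun t => exp (logLaplace β lam ρ t) * logLaplaceDeriv β lam ρ t)
      (exp (logLaplace β lam ρ s) *
        (logLaplaceDeriv β lam ρ s ^ 2 + logLaplaceDeriv2 β lam ρ s)) s :=
  ((hasDerivAt_exp_logLaplace hA hB).mul (hasDerivAt_logLaplaceDeriv hA hB)).congr_deriv
    (by ring)

lemma continuousAt_exp_logLaplace_mul_sq_add :
    ContinuousAt (fun t => exp (logLaplace β lam ρ t) *
      (logLaplaceDeriv β lam ρ t ^ 2 + logLaplaceDeriv2 β lam ρ t)) s := by
  have := (hasDerivAt_logLaplace (β := β) hA hB).continuousAt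
  have := (hasDerivAt_logLaplaceDeriv (β := β) hA hB).continuousAt
  have := continuousAt_logLaplaceDeriv2 (β := β) hA hB
  fun_prop

end TemperedStableAR

open TemperedStableAR in
theorem stmt_16_general (β lam ρ : ℝ) (hlam : 0 < lam)
    (hρ0 : 0 < ρ)
    (μ : Measure ℝ) (hprob : IsProbabilityMeasure μ) (hpos : μ (Set.Iio (0 : ℝ)) = 0)
    (hLT : ∀ s : ℝ, 0 ≤ s →
      ∫ x, Real.exp (-(s * x)) ∂μ = Real.exp ((ρ * s + lam) ^ β - (s + lam) ^ β)) :
    Integrable (fun x : ℝ => x) μ ∧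
    Integrable (fun x : ℝ => x ^ 2) μ ∧
    (∫ x, x ∂μ = β * lam ^ (β - 1) * (1 - ρ)) ∧
    (∫ x, x ^ 2 ∂μ =
      (β * lam ^ (β - 1) * (1 - ρ)) ^ 2 + β * (1 - β) * lam ^ (β - 2) * (1 - ρ ^ 2)) := by
  have hμ : ∀ᵐ x ∂μ, 0 ≤ x := by
    simp only [ae_iff, not_le]
    exact hpos
  have hA (s : ℝ) (hs : 0 ≤ s) : 0 < ρ * s + lam := by positivity
  have hB (s : ℝ) (hs : 0 ≤ s) : 0 < s + lam := by positivity
  have hL0 : ∀ s > 0, ∫ x, x ^ 0 * exp (-(s * x)) ∂μ = exp (logLaplace β lam ρ s) :=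
    fun s hs => by simpa [logLaplace] using hLT s hs.le
  have hL1 : ∀ s > 0, ∫ x, x ^ 1 * exp (-(s * x)) ∂μ
      = -(exp (logLaplace β lam ρ s) * logLaplaceDeriv β lam ρ s) := fun s =>
    integral_pow_succ_mul_exp_neg_eq hμ hL0 fun s hs =>
      hasDerivAt_exp_logLaplace (hA s hs.le) (hB s hs.le)
  have hL2 : ∀ s > 0, ∫ x, x ^ 2 * exp (-(s * x)) ∂μ = exp (logLaplace β lam ρ s) *
      (logLaplaceDeriv β lam ρ s ^ 2 + logLaplaceDeriv2 β lam ρ s) := fun s hs =>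
    (integral_pow_succ_mul_exp_neg_eq hμ hL1 (fun s hs =>
      (hasDerivAt_exp_logLaplace_mul_logLaplaceDeriv (hA s hs.le) (hB s hs.le)).neg) hs).trans
      (neg_neg _)
  obtain ⟨hint1, hm1⟩ := integrable_pow_and_integral_eq hμ hL1
    ((hasDerivAt_exp_logLaplace_mul_logLaplaceDeriv (β := β) (hA 0 le_rfl) (hB 0 le_rfl)).neg
      |>.continuousAt.continuousWithinAt)
  obtain ⟨hint2, hm2⟩ := integrable_pow_and_integral_eq hμ hL2
    (continuousAt_exp_logLaplace_mul_sq_add (hA 0 le_rfl) (hB 0 le_rfl)).continuousWithinAt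
  simp only [pow_one] at hint1 hm1
  refine ⟨hint1, hint2, ?_, ?_⟩
  · rw [hm1, logLaplace_zero, logLaplaceDeriv_zero, exp_zero]
    ring
  · rw [hm2, logLaplace_zero, logLaplaceDeriv_zero, logLaplaceDeriv2_zero, exp_zero]
    ring

/-- For `0 < β < 1`, `λ > 0`, `0 < ρ < 1` and `μ` a probability measure on
`[0,∞)` with `∫ e^(-sx) dμ(x) = exp((ρs+λ)^β - (s+λ)^β)` for all `s ≥ 0`, `μ` has
finite first and second moments with `∫ x dμ(x) = β λ^(β-1)(1-ρ)` and
`∫ x² dμ(x) = (β λ^(β-1)(1-ρ))² + β(1-β) λ^(β-2)(1-ρ²)`. -/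
theorem stmt_16 (β lam ρ : ℝ) (hβ0 : 0 < β) (hβ1 : β < 1) (hlam : 0 < lam)
    (hρ0 : 0 < ρ) (hρ1 : ρ < 1)
    (μ : Measure ℝ) (hprob : IsProbabilityMeasure μ) (hpos : μ (Set.Iio (0 : ℝ)) = 0)
    (hLT : ∀ s : ℝ, 0 ≤ s →
      ∫ x, Real.exp (-(s * x)) ∂μ = Real.exp ((ρ * s + lam) ^ β - (s + lam) ^ β)) :
    Integrable (fun x : ℝ => x) μ ∧
    Integrable (fun x : ℝ => x ^ 2) μ ∧
    (∫ x, x ∂μ = β * lam ^ (β - 1) * (1 - ρ)) ∧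
    (∫ x, x ^ 2 ∂μ =
      (β * lam ^ (β - 1) * (1 - ρ)) ^ 2 + β * (1 - β) * lam ^ (β - 2) * (1 - ρ ^ 2)) :=
  stmt_16_general β lam ρ hlam hρ0 μ hprob hpos hLT
end
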